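/- arXiv:2202.05150 — 2 statements merged into one kernel-verified Lean document; each statement's English description precedes it below -/
import Mathlib

section
/- Define φ_j(S, a) = -|S|·K₀ - K₁·log(a + r_S) with K₀, K₁ > 0 and r_{S∪{k}} ≤ r_S, r_S > 0. If φ_j(S ∪ {k}, a) < φ_j(S, a) for some a > 0, then φ_j(S ∪ {k}, b) < φ_j(S, b) for every b > a. -/
/-- Monotone property (ii) of the nodewise score φ_j(S, a) = -|S|·K₀ - K₁·log(a + r_S):
if removing is favored at level a (i.e. the score with the extra column k is worse at a),
then the same holds at every larger level b > a.  Here r_S > 0 and r_{S∪{k}} ∈ [0, r_S]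
are residual sums of squares, and |S ∪ {k}| = |S| + 1. -/
theorem nodewise_score_monotone_increase
    (K₀ K₁ : ℝ) (hK₀ : 0 < K₀) (hK₁ : 0 < K₁)
    (s : ℕ) (rS rSk : ℝ) (hrS : 0 < rS) (hrSk : 0 ≤ rSk) (hle : rSk ≤ rS)
    (φS φSk : ℝ → ℝ)
    (hφS : ∀ a : ℝ, φS a = -(s : ℝ) * K₀ - K₁ * Real.log (a + rS))
    (hφSk : ∀ a : ℝ, φSk a = -((s : ℝ) + 1) * K₀ - K₁ * Real.log (a + rSk))
    (a : ℝ) (ha : 0 < a) (h : φSk a < φS a) :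
    ∀ b : ℝ, a < b → φSk b < φS b := by
  intro b hb
  rw [hφS, hφSk] at h ⊢
  have h1 : (0:ℝ) < a + rSk := by linarith
  have h2 : (0:ℝ) < a + rS := by linarith
  have h3 : (0:ℝ) < b + rSk := by linarith
  have h4 : (0:ℝ) < b + rS := by linarith
  have key : Real.log (b+rS) - Real.log (b+rSk) ≤ Real.log (a+rS) - Real.log (a+rSk) := by
    rw [← Real.log_div (ne_of_gt h4) (ne_of_gt h3), ← Real.log_div (ne_of_gt h2) (ne_of_gt h1)]
    apply Real.log_le_log (by positivity)
    rw [div_le_div_iff₀ h3 h1]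
    nlinarith [mul_nonneg (sub_pos.2 hb).le (sub_nonneg.2 hle)]
  nlinarith [mul_le_mul_of_nonneg_left key hK₁.le]
end

section
/- Let χ²_d be a chi-squared random variable with d degrees of freedom. Then for any a > 0, P(χ²_d/d ≤ 1 - a) ≤ exp(-a²d/4) and P(χ²_d/d ≥ 1 + a + a²/2) ≤ exp(-a²d/4). -/
open MeasureTheory ProbabilityTheory Real Set

lemma gammaPDFReal_mul_exp' {k r t : ℝ} (hr : 0 < r) (htr : t < r) (x : ℝ) :
    gammaPDFReal k r x * Real.exp (t * x) =
      (r / (r - t)) ^ k * gammaPDFReal k (r - t) x := by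
  unfold gammaPDFReal
  split_ifs with hx
  · have hrt : (0:ℝ) < r - t := by linarith
    have h1 : (r / (r - t)) ^ k * (r - t) ^ k = r ^ k := by
      rw [← Real.mul_rpow (by positivity) hrt.le, div_mul_cancel₀ _ hrt.ne']
    have h2 : Real.exp (-(r * x)) * Real.exp (t * x) = Real.exp (-((r - t) * x)) := by
      rw [← Real.exp_add]; ring_nf
    calc r ^ k / Real.Gamma k * x ^ (k - 1) * Real.exp (-(r * x)) * Real.exp (t * x)
        = r ^ k / Real.Gamma k * x ^ (k - 1) * (Real.exp (-(r * x)) * Real.exp (t * x)) := by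
          ring
      _ = r ^ k / Real.Gamma k * x ^ (k - 1) * Real.exp (-((r - t) * x)) := by rw [h2]
      _ = (r / (r - t)) ^ k *
            ((r - t) ^ k / Real.Gamma k * x ^ (k - 1) * Real.exp (-((r - t) * x))) := by
          rw [← h1]; ring
  · simp

lemma lintegral_exp_gammaMeasure' {k r t : ℝ} (hk : 0 < k) (hr : 0 < r) (htr : t < r) :
    ∫⁻ x, ENNReal.ofReal (Real.exp (t * x)) ∂(gammaMeasure k r) =
      ENNReal.ofReal ((r / (r - t)) ^ k) := by
  have hrt : (0:ℝ) < r - t := by linarith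
  have hm : Measurable (gammaPDF k r) := (measurable_gammaPDFReal k r).ennreal_ofReal
  rw [gammaMeasure, lintegral_withDensity_eq_lintegral_mul _ hm (by fun_prop)]
  have hpt : ∀ x : ℝ, gammaPDF k r x * ENNReal.ofReal (Real.exp (t * x)) =
      ENNReal.ofReal ((r / (r - t)) ^ k) * gammaPDF k (r - t) x := by
    intro x
    rw [gammaPDF, gammaPDF, ← ENNReal.ofReal_mul (gammaPDFReal_nonneg hk hr x),
      ← ENNReal.ofReal_mul (by positivity), gammaPDFReal_mul_exp' hr htr]
  simp only [Pi.mul_apply, hpt]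
  have hm' : Measurable (gammaPDF k (r - t)) := (measurable_gammaPDFReal k (r - t)).ennreal_ofReal
  rw [lintegral_const_mul _ hm', lintegral_gammaPDF_eq_one hk hrt, mul_one]

lemma gamma_chernoff_upper {k r t s : ℝ} (hk : 0 < k) (hr : 0 < r) (ht : 0 < t) (htr : t < r) :
    gammaMeasure k r {x : ℝ | s ≤ x} ≤
      ENNReal.ofReal (Real.exp (-(t * s)) * (r / (r - t)) ^ k) := by
  set μ := gammaMeasure k r
  have hsub : {x : ℝ | s ≤ x} ⊆
      {x : ℝ | ENNReal.ofReal (Real.exp (t * s)) ≤ ENNReal.ofReal (Real.exp (t * x))} :=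
    fun x hx => ENNReal.ofReal_le_ofReal (Real.exp_le_exp.2 (mul_le_mul_of_nonneg_left hx ht.le))
  have hmark := mul_meas_ge_le_lintegral₀ (μ := μ)
    (f := fun x => ENNReal.ofReal (Real.exp (t * x))) (by fun_prop)
    (ENNReal.ofReal (Real.exp (t * s)))
  rw [lintegral_exp_gammaMeasure' hk hr htr] at hmark
  calc μ {x : ℝ | s ≤ x}
      = ENNReal.ofReal (Real.exp (-(t * s))) *
          (ENNReal.ofReal (Real.exp (t * s)) * μ {x : ℝ | s ≤ x}) := by
        rw [← mul_assoc, ← ENNReal.ofReal_mul (Real.exp_pos _).le, ← Real.exp_add]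
        simp
    _ ≤ ENNReal.ofReal (Real.exp (-(t * s))) *
          (ENNReal.ofReal (Real.exp (t * s)) *
            μ {x : ℝ | ENNReal.ofReal (Real.exp (t * s)) ≤ ENNReal.ofReal (Real.exp (t * x))}) :=
        mul_le_mul_right (mul_le_mul_right (measure_mono hsub) _) _
    _ ≤ ENNReal.ofReal (Real.exp (-(t * s))) * ENNReal.ofReal ((r / (r - t)) ^ k) :=
        mul_le_mul_right hmark _
    _ = ENNReal.ofReal (Real.exp (-(t * s)) * (r / (r - t)) ^ k) := by
        rw [← ENNReal.ofReal_mul (Real.exp_pos _).le]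

lemma gamma_chernoff_lower {k r t s : ℝ} (hk : 0 < k) (hr : 0 < r) (ht : 0 < t) :
    gammaMeasure k r {x : ℝ | x ≤ s} ≤
      ENNReal.ofReal (Real.exp (t * s) * (r / (r + t)) ^ k) := by
  set μ := gammaMeasure k r
  have htr : -t < r := by linarith
  have hsub : {x : ℝ | x ≤ s} ⊆
      {x : ℝ | ENNReal.ofReal (Real.exp (-t * s)) ≤ ENNReal.ofReal (Real.exp (-t * x))} := by
    intro x hx
    exact ENNReal.ofReal_le_ofReal (Real.exp_le_exp.2 (by nlinarith [Set.mem_setOf_eq ▸ hx]))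
  have hmark := mul_meas_ge_le_lintegral₀ (μ := μ)
    (f := fun x => ENNReal.ofReal (Real.exp (-t * x))) (by fun_prop)
    (ENNReal.ofReal (Real.exp (-t * s)))
  rw [lintegral_exp_gammaMeasure' hk hr htr] at hmark
  have hplus : r - -t = r + t := by ring
  rw [hplus] at hmark
  calc μ {x : ℝ | x ≤ s}
      = ENNReal.ofReal (Real.exp (t * s)) *
          (ENNReal.ofReal (Real.exp (-t * s)) * μ {x : ℝ | x ≤ s}) := by
        rw [← mul_assoc, ← ENNReal.ofReal_mul (Real.exp_pos _).le, ← Real.exp_add]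
        simp
    _ ≤ ENNReal.ofReal (Real.exp (t * s)) *
          (ENNReal.ofReal (Real.exp (-t * s)) *
            μ {x : ℝ | ENNReal.ofReal (Real.exp (-t * s)) ≤ ENNReal.ofReal (Real.exp (-t * x))}) :=
        mul_le_mul_right (mul_le_mul_right (measure_mono hsub) _) _
    _ ≤ ENNReal.ofReal (Real.exp (t * s)) * ENNReal.ofReal ((r / (r + t)) ^ k) :=
        mul_le_mul_right hmark _
    _ = ENNReal.ofReal (Real.exp (t * s) * (r / (r + t)) ^ k) := by
        rw [← ENNReal.ofReal_mul (Real.exp_pos _).le]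

lemma one_sub_le_exp_key {a : ℝ} (ha0 : 0 ≤ a) (ha1 : a < 1) :
    1 - a ≤ Real.exp (-(a + a ^ 2 / 2)) := by
  set f : ℝ → ℝ := fun x => Real.log (1 - x) + x + x ^ 2 / 2 with hf
  have key : f a ≤ f 0 := by
    have hcont : ContinuousOn f (Set.Icc 0 a) := by
      apply ContinuousOn.add
      apply ContinuousOn.add
      · apply ContinuousOn.log (by fun_prop)
        intro x hx
        have := hx.2
        have : x ≤ a := hx.2
        nlinarith
      · exact continuousOn_id
      · fun_prop
    have hderiv : ∀ x ∈ interior (Set.Icc 0 a), deriv f x ≤ 0 := by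
      intro x hx
      rw [interior_Icc] at hx
      have hx1 : x < 1 := lt_of_lt_of_le hx.2 ha1.le
      have h1x : (0:ℝ) < 1 - x := by linarith
      have hd : HasDerivAt f ((1 - x)⁻¹ * (0 - 1) + 1 + x) x := by
        have hlog : HasDerivAt (fun x : ℝ => Real.log (1 - x)) ((1 - x)⁻¹ * (0 - 1)) x := by
          exact (Real.hasDerivAt_log h1x.ne').comp x
            ((hasDerivAt_const x (1:ℝ)).sub (hasDerivAt_id x))
        have : HasDerivAt (fun x : ℝ => x ^ 2 / 2) x x := by
          simpa using (hasDerivAt_pow 2 x).div_const 2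
        exact (hlog.add (hasDerivAt_id x)).add this
      rw [hd.deriv]
      have heq : (1 - x)⁻¹ * (0 - 1) + 1 + x = -(x ^ 2 * (1 - x)⁻¹) := by
        field_simp
        ring
      rw [heq]
      exact neg_nonpos.2 (by positivity)
    have hanti : AntitoneOn f (Set.Icc 0 a) :=
      antitoneOn_of_deriv_nonpos (convex_Icc 0 a) hcont
        (fun x hx => by
          rw [interior_Icc] at hx
          have hx1 : x < 1 := lt_of_lt_of_le hx.2 ha1.le
          have h1x : (0:ℝ) < 1 - x := by linarith
          have hlog : HasDerivAt (fun x : ℝ => Real.log (1 - x)) ((1 - x)⁻¹ * (0 - 1)) x :=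
            (Real.hasDerivAt_log h1x.ne').comp x
              ((hasDerivAt_const x (1:ℝ)).sub (hasDerivAt_id x))
          have h2 : HasDerivAt (fun x : ℝ => x ^ 2 / 2) x x := by
            simpa using (hasDerivAt_pow 2 x).div_const 2
          exact (((hlog.add (hasDerivAt_id x)).add h2).differentiableAt).differentiableWithinAt)
        hderiv
    exact hanti (Set.left_mem_Icc.2 ha0) (Set.mem_Icc.2 ⟨ha0, le_refl a⟩) ha0
  have hf0 : f 0 = 0 := by simp [hf]
  have h1a : (0:ℝ) < 1 - a := by linarith
  have hlog : Real.log (1 - a) ≤ -(a + a ^ 2 / 2) := by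
    have := key
    rw [hf0] at this
    simp only [hf] at this
    linarith
  calc 1 - a = Real.exp (Real.log (1 - a)) := (Real.exp_log h1a).symm
    _ ≤ Real.exp (-(a + a ^ 2 / 2)) := Real.exp_le_exp.2 hlog

/-- Laurent–Massart tail bounds for the chi-squared distribution with d degrees of
freedom (the Gamma(d/2, 1/2) distribution): for any a > 0,
P(χ²_d/d ≤ 1 - a) ≤ exp(-a²d/4) and P(χ²_d/d ≥ 1 + a + a²/2) ≤ exp(-a²d/4). -/
theorem chi_squared_tail_bounds (d : ℕ) (hd : 0 < d) (a : ℝ) (ha : 0 < a) :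
    gammaMeasure ((d : ℝ) / 2) (1 / 2) {x : ℝ | x / d ≤ 1 - a} ≤
      ENNReal.ofReal (Real.exp (-a ^ 2 * d / 4)) ∧
    gammaMeasure ((d : ℝ) / 2) (1 / 2) {x : ℝ | 1 + a + a ^ 2 / 2 ≤ x / d} ≤
      ENNReal.ofReal (Real.exp (-a ^ 2 * d / 4)) := by
  have hd' : (0:ℝ) < d := Nat.cast_pos.mpr hd
  have hk : (0:ℝ) < (d : ℝ) / 2 := by positivity
  have hr : (0:ℝ) < 1 / 2 := by norm_num
  constructor
  · -- lower tail
    have hset : {x : ℝ | x / d ≤ 1 - a} = {x : ℝ | x ≤ (1 - a) * d} := by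
      ext x; simp [div_le_iff₀ hd']
    rw [hset]
    rcases lt_or_ge a 1 with ha1 | ha1
    · have h1a : (0:ℝ) < 1 - a := by linarith
      set t : ℝ := a / (2 * (1 - a)) with htdef
      have ht : 0 < t := by positivity
      refine (gamma_chernoff_lower hk hr ht).trans (ENNReal.ofReal_le_ofReal ?_)
      have hne : (1:ℝ) - a ≠ 0 := h1a.ne'
      have e1 : t * ((1 - a) * d) = a * d / 2 := by
        rw [htdef]
        field_simp [hne]
        try ring
      have e2 : (1/2 : ℝ) / (1/2 + t) = 1 - a := by
        rw [htdef, div_eq_iff (by positivity)]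
        field_simp [hne]
        try ring
      rw [e1, e2]
      calc Real.exp (a * d / 2) * (1 - a) ^ ((d:ℝ)/2)
          ≤ Real.exp (a * d / 2) * (Real.exp (-(a + a ^ 2 / 2))) ^ ((d:ℝ)/2) := by
            apply mul_le_mul_of_nonneg_left _ (Real.exp_pos _).le
            exact Real.rpow_le_rpow h1a.le (one_sub_le_exp_key ha.le ha1) (by positivity)
        _ = Real.exp (-a ^ 2 * d / 4) := by
            rw [← Real.exp_mul, ← Real.exp_add]
            congr 1
            ring
    · -- a ≥ 1 : set is contained in Iic 0, which has measure zero
      have hzero : gammaMeasure ((d : ℝ) / 2) (1 / 2) {x : ℝ | x ≤ (1 - a) * d} = 0 := by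
        have hsub : {x : ℝ | x ≤ (1 - a) * d} ⊆ Set.Iic 0 := by
          intro x hx
          simp only [Set.mem_setOf_eq] at hx
          have : (1 - a) * d ≤ 0 := mul_nonpos_of_nonpos_of_nonneg (by linarith) hd'.le
          exact Set.mem_Iic.2 (hx.trans this)
        refine le_antisymm ?_ zero_le
        refine (measure_mono hsub).trans ?_
        rw [gammaMeasure, withDensity_apply _ measurableSet_Iic]
        rw [setLIntegral_congr Iio_ae_eq_Iic.symm]
        rw [lintegral_gammaPDF_of_nonpos le_rfl]
      rw [hzero]
      exact zero_le
  · -- upper tail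
    have hset : {x : ℝ | 1 + a + a ^ 2 / 2 ≤ x / d} = {x : ℝ | (1 + a + a ^ 2 / 2) * d ≤ x} := by
      ext x; simp [le_div_iff₀ hd']
    rw [hset]
    set τ : ℝ := a + a ^ 2 / 2 with hτdef
    have hτ : 0 < τ := by positivity
    set t : ℝ := τ / (2 * (1 + τ)) with htdef
    have ht : 0 < t := by positivity
    have htr : t < 1 / 2 := by
      rw [htdef, div_lt_iff₀ (by positivity)]
      nlinarith
    refine (gamma_chernoff_upper hk hr ht htr).trans (ENNReal.ofReal_le_ofReal ?_)
    have hne : (1:ℝ) + τ ≠ 0 := by positivity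
    have e1 : t * ((1 + a + a ^ 2 / 2) * d) = τ * d / 2 := by
      rw [htdef, hτdef]
      field_simp
      try ring
    have hne2 : (1:ℝ)/2 - t ≠ 0 := ne_of_gt (by linarith)
    have e2 : (1/2 : ℝ) / (1/2 - t) = 1 + τ := by
      rw [htdef] at hne2 ⊢
      rw [div_eq_iff hne2]
      field_simp [hne]
      try ring
    rw [e1, e2]
    have hexp : 1 + τ ≤ Real.exp a := by
      have := Real.quadratic_le_exp_of_nonneg ha.le
      rw [hτdef]; linarith
    calc Real.exp (-(τ * d / 2)) * (1 + τ) ^ ((d:ℝ)/2)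
        ≤ Real.exp (-(τ * d / 2)) * (Real.exp a) ^ ((d:ℝ)/2) := by
          apply mul_le_mul_of_nonneg_left _ (Real.exp_pos _).le
          exact Real.rpow_le_rpow (by positivity) hexp (by positivity)
      _ = Real.exp (-a ^ 2 * d / 4) := by
          rw [← Real.exp_mul, ← Real.exp_add]
          congr 1
          rw [hτdef]
          ring
end
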